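/- Let E be an AL-space and (T_t)_{t∈J} a Markov semigroup on E (J = ℕ or (0,∞)). Then (T_t) converges strongly as t → ∞ if and only if for every normalised f ∈ E₊ there exists a lower bound h_f for the orbit of f (i.e. ‖(T_t f − h_f)⁻‖ → 0) such that inf_f ‖h_f‖ > 0. -/

import Mathlib

/-!
For a positive `f`, the positive asymptotic lower bounds of the orbit `T t f` form a closed,
sup-closed, norm-bounded set; as bounded monotone sequences converge in an AL-space, this set has
a greatest element `g`, and `g` is fixed by the semigroup. If `‖g‖ < ‖f‖`, then for large `s` the
vector `(T s f - g)⁺` has norm at least `‖f‖ - ‖g‖`, and adding one of its lower bounds to `g`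
gives an approximate lower bound of the orbit of `f` of norm at least `‖g‖ + ε (‖f‖ - ‖g‖)`. A
limsup of such approximate bounds with summable errors is an exact lower bound above `g`, which is
absurd. Hence `‖g‖ = ‖f‖`, and additivity of the norm turns this into
`‖T t f - g‖ ≤ 2 ‖(T t f - g)⁻‖ → 0`.
-/

open Filter Topology

section LatticeOrderedGroup

variable {α : Type*} [AddCommGroup α] [Lattice α] [IsOrderedAddMonoid α]

lemma nonneg_of_two_pow_nsmul_nonneg {a : α} : ∀ k : ℕ, 0 ≤ 2 ^ k • a → 0 ≤ a
  | 0, h => by simpa using h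
  | k + 1, h => nonneg_of_two_pow_nsmul_nonneg k <|
      nsmul_two_semiclosed <| by rwa [← mul_nsmul, ← pow_succ]

lemma negPart_add_le (a b : α) : (a + b)⁻ ≤ a⁻ + b⁻ :=
  sup_le (by rw [neg_add]; exact add_le_add (neg_le_negPart a) (neg_le_negPart b))
    (add_nonneg (negPart_nonneg a) (negPart_nonneg b))

lemma negPart_sub_le_of_nonneg (a : α) {b : α} (hb : 0 ≤ b) : (a - b)⁻ ≤ a⁻ + b := by
  simpa [sub_eq_add_neg, posPart_eq_self.2 hb] using negPart_add_le a (-b)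

lemma negPart_sub_sup_le (x a b : α) : (x - a ⊔ b)⁻ ≤ (x - a)⁻ + (x - b)⁻ := by
  rw [sub_sup, negPart_def, neg_inf]
  refine sup_le (sup_le ?_ ?_) (add_nonneg (negPart_nonneg _) (negPart_nonneg _))
  · exact le_add_of_le_of_nonneg (neg_le_negPart _) (negPart_nonneg _)
  · exact le_add_of_nonneg_of_le (negPart_nonneg _) (neg_le_negPart _)

end LatticeOrderedGroup

section SolidNorm

variable {E : Type*} [NormedAddCommGroup E] [Lattice E] [HasSolidNorm E] [IsOrderedAddMonoid E]

lemma norm_le_norm_of_nonneg_of_le {a b : E} (ha : 0 ≤ a) (hab : a ≤ b) : ‖a‖ ≤ ‖b‖ :=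
  norm_le_norm_of_abs_le_abs <| by rwa [abs_of_nonneg ha, abs_of_nonneg (ha.trans hab)]

lemma norm_negPart_sub_le (a h h' : E) : ‖(a - h')⁻‖ ≤ ‖(a - h)⁻‖ + ‖h - h'‖ := by
  have := (lipschitzWith_negPart (α := E)).dist_le_mul (a - h') (a - h)
  rw [NNReal.coe_one, one_mul, dist_eq_norm, dist_eq_norm, sub_sub_sub_cancel_left] at this
  linarith [norm_sub_norm_le (a - h')⁻ (a - h)⁻]

variable [NormedSpace ℝ E]

-- The order of `E` is not assumed compatible with the `ℝ`-action; closedness of the positive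
-- cone and dyadic approximation make it so.
lemma smul_nonneg_of_hasSolidNorm {c : ℝ} (hc : 0 ≤ c) {a : E} (ha : 0 ≤ a) : 0 ≤ c • a := by
  have hdyadic : ∀ k : ℕ, 0 ≤ ((⌊c * 2 ^ k⌋₊ : ℝ) / 2 ^ k) • a := fun k ↦ by
    refine nonneg_of_two_pow_nsmul_nonneg k ?_
    rw [← Nat.cast_smul_eq_nsmul ℝ, smul_smul, Nat.cast_pow, Nat.cast_ofNat,
      mul_div_cancel₀ _ (by positivity), Nat.cast_smul_eq_nsmul]
    exact nsmul_nonneg ha _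
  have hlim : Tendsto (fun k : ℕ ↦ (⌊c * 2 ^ k⌋₊ : ℝ) / 2 ^ k) atTop (𝓝 c) :=
    (tendsto_nat_floor_mul_div_atTop hc).comp (tendsto_pow_atTop_atTop_of_one_lt one_lt_two)
  exact isClosed_nonneg.mem_of_tendsto (hlim.smul_const a) (Eventually.of_forall hdyadic)

instance : PosSMulMono ℝ E :=
  PosSMulMono.of_smul_nonneg fun _ hc _ ha ↦ smul_nonneg_of_hasSolidNorm hc ha

lemma negPart_smul_of_nonneg {c : ℝ} (hc : 0 ≤ c) (x : E) : (c • x)⁻ = c • x⁻ := by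
  rcases hc.eq_or_lt with rfl | hc
  · simp
  · have := (OrderIso.smulRight hc).map_sup (-x) 0
    rw [OrderIso.smulRight_apply, OrderIso.smulRight_apply, OrderIso.smulRight_apply,
      smul_zero, smul_neg] at this
    rw [negPart_def, negPart_def, this]

end SolidNorm

section Markov

variable {E : Type*} [NormedAddCommGroup E] [Lattice E] [NormedSpace ℝ E]

structure IsMarkov (S : E →L[ℝ] E) : Prop where
  nonneg : ∀ f, 0 ≤ f → 0 ≤ S f
  norm_map_of_nonneg : ∀ f, 0 ≤ f → ‖S f‖ = ‖f‖

namespace IsMarkov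

variable {S T : E →L[ℝ] E}

lemma comp (hS : IsMarkov S) (hT : IsMarkov T) : IsMarkov (S.comp T) :=
  ⟨fun f hf ↦ hS.nonneg _ (hT.nonneg f hf),
    fun f hf ↦ (hS.norm_map_of_nonneg _ (hT.nonneg f hf)).trans (hT.norm_map_of_nonneg f hf)⟩

lemma pow (hS : IsMarkov S) : ∀ n : ℕ, IsMarkov (S ^ n)
  | 0 => ⟨fun _ hf ↦ hf, fun _ _ ↦ rfl⟩
  | n + 1 => by rw [pow_succ, ContinuousLinearMap.mul_def]; exact (hS.pow n).comp hS

variable [IsOrderedAddMonoid E]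

lemma monotone (hS : IsMarkov S) : Monotone S := fun x y hxy ↦ by
  simpa [sub_nonneg] using hS.nonneg _ (sub_nonneg.2 hxy)

lemma negPart_map_le (hS : IsMarkov S) (x : E) : (S x)⁻ ≤ S x⁻ :=
  sup_le (by rw [← map_neg]; exact hS.monotone (neg_le_negPart x)) (hS.nonneg _ (negPart_nonneg x))

lemma norm_negPart_map_le [HasSolidNorm E] (hS : IsMarkov S) (x : E) : ‖(S x)⁻‖ ≤ ‖x⁻‖ :=
  (norm_le_norm_of_nonneg_of_le (negPart_nonneg _) (hS.negPart_map_le x)).trans_eq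
    (hS.norm_map_of_nonneg _ (negPart_nonneg x))

end IsMarkov

end Markov

section LowerBound

variable {ι E : Type*} [Preorder ι] [NormedAddCommGroup E] [Lattice E]

/-- `limsup_t ‖(x t - h)⁻‖ ≤ δ` -/
def IsLowerBoundUpTo (x : ι → E) (δ : ℝ) (h : E) : Prop :=
  ∀ δ' > δ, ∀ᶠ t in atTop, ‖(x t - h)⁻‖ < δ'

def asymptoticLowerBounds (x : ι → E) : Set E :=
  {h | 0 ≤ h ∧ IsLowerBoundUpTo x 0 h}

variable {x y : ι → E} {δ δ' : ℝ} {h h' : E}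

lemma isLowerBoundUpTo_zero_iff :
    IsLowerBoundUpTo x 0 h ↔ Tendsto (fun t ↦ ‖(x t - h)⁻‖) atTop (𝓝 0) := by
  simp only [Metric.tendsto_nhds, dist_zero_right, norm_norm]
  rfl

namespace IsLowerBoundUpTo

lemma mono (hh : IsLowerBoundUpTo x δ h) (hδ : δ ≤ δ') : IsLowerBoundUpTo x δ' h :=
  fun ε hε ↦ hh ε (hδ.trans_lt hε)

lemma congr (hh : IsLowerBoundUpTo x δ h) (hxy : x =ᶠ[atTop] y) : IsLowerBoundUpTo y δ h :=
  fun ε hε ↦ by filter_upwards [hh ε hε, hxy] with _ ht hxyt; rwa [← hxyt]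

lemma of_tendsto {τ : ℕ → ℝ} (hh : ∀ n, IsLowerBoundUpTo x (τ n) h)
    (hτ : Tendsto τ atTop (𝓝 δ)) : IsLowerBoundUpTo x δ h := fun ε hε ↦
  have ⟨n, hn⟩ := (hτ.eventually (gt_mem_nhds hε)).exists
  hh n ε hn

end IsLowerBoundUpTo

variable [IsOrderedAddMonoid E] [HasSolidNorm E]

namespace IsLowerBoundUpTo

lemma anti (hh : IsLowerBoundUpTo x δ h) (hh' : h' ≤ h) : IsLowerBoundUpTo x δ h' :=
  fun ε hε ↦ (hh ε hε).mono fun _ ht ↦ (norm_le_norm_of_nonneg_of_le (negPart_nonneg _)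
    (negPart_anti (sub_le_sub_left hh' _))).trans_lt ht

lemma sup {δ₁ δ₂ : ℝ} {h₁ h₂ : E} (hh₁ : IsLowerBoundUpTo x δ₁ h₁)
    (hh₂ : IsLowerBoundUpTo x δ₂ h₂) : IsLowerBoundUpTo x (δ₁ + δ₂) (h₁ ⊔ h₂) := fun ε hε ↦ by
  filter_upwards [hh₁ (δ₁ + (ε - (δ₁ + δ₂)) / 2) (by linarith),
    hh₂ (δ₂ + (ε - (δ₁ + δ₂)) / 2) (by linarith)] with t ht₁ ht₂
  calc ‖(x t - h₁ ⊔ h₂)⁻‖ ≤ ‖(x t - h₁)⁻ + (x t - h₂)⁻‖ :=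
        norm_le_norm_of_nonneg_of_le (negPart_nonneg _) (negPart_sub_sup_le _ _ _)
    _ ≤ ‖(x t - h₁)⁻‖ + ‖(x t - h₂)⁻‖ := norm_add_le _ _
    _ < ε := by linarith

lemma partialSups {H : ℕ → E} {δ : ℕ → ℝ} (hH : ∀ n, IsLowerBoundUpTo x (δ n) (H n)) (n : ℕ) :
    IsLowerBoundUpTo x (∑ i ∈ Finset.range (n + 1), δ i) (_root_.partialSups H n) := by
  induction n with
  | zero => simpa using hH 0
  | succ n ih =>
    have := partialSups_succ H n
    rw [Order.succ_eq_add_one] at this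
    rw [Finset.sum_range_succ, this]
    exact ih.sup (hH _)

lemma of_norm_sub_le {η : ℝ} (hh : IsLowerBoundUpTo x δ h) (hη : ‖h - h'‖ ≤ η) :
    IsLowerBoundUpTo x (δ + η) h' := fun ε hε ↦
  (hh (ε - η) (by linarith)).mono fun t ht ↦ by linarith [norm_negPart_sub_le (x t) h h']

lemma norm_le [IsDirectedOrder ι] [Nonempty ι] {C : ℝ} (hh : IsLowerBoundUpTo x δ h)
    (h0 : 0 ≤ h) (hx : ∀ᶠ t in atTop, ‖x t‖ ≤ C) : ‖h‖ ≤ C + δ := by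
  refine le_of_forall_pos_lt_add fun ε hε ↦ ?_
  obtain ⟨t, hxt, ht⟩ := (hx.and (hh (δ + ε) (by linarith))).exists
  have hle : h ≤ x t + (x t - h)⁻ := by
    have := neg_le_negPart (x t - h)
    rw [neg_sub] at this
    exact sub_le_iff_le_add'.1 this
  calc ‖h‖ ≤ ‖x t + (x t - h)⁻‖ := norm_le_norm_of_nonneg_of_le h0 hle
    _ ≤ ‖x t‖ + ‖(x t - h)⁻‖ := norm_add_le _ _
    _ < C + δ + ε := by linarith

lemma add_sub {a b : ι → E} {k : E} {δ₁ δ₂ : ℝ} (hk : IsLowerBoundUpTo a δ₁ k)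
    (hb : ∀ᶠ t in atTop, 0 ≤ b t ∧ ‖b t‖ ≤ δ₂) (g : E) :
    IsLowerBoundUpTo (fun t ↦ g + a t - b t) (δ₁ + δ₂) (g + k) := fun ε hε ↦ by
  filter_upwards [hk (ε - δ₂) (by linarith), hb] with t ht ⟨hb0, hbδ⟩
  have hsplit : g + a t - b t - (g + k) = a t - k - b t := by abel
  calc ‖(g + a t - b t - (g + k))⁻‖ ≤ ‖(a t - k)⁻ + b t‖ := by
        rw [hsplit]
        exact norm_le_norm_of_nonneg_of_le (negPart_nonneg _) (negPart_sub_le_of_nonneg _ hb0)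
    _ ≤ ‖(a t - k)⁻‖ + ‖b t‖ := norm_add_le _ _
    _ < ε := by linarith

end IsLowerBoundUpTo

lemma isClosed_setOf_isLowerBoundUpTo (x : ι → E) (δ : ℝ) :
    IsClosed {h | IsLowerBoundUpTo x δ h} := by
  refine isClosed_of_closure_subset fun h hh ε hε ↦ ?_
  obtain ⟨b, hb, hbh⟩ := Metric.mem_closure_iff.1 hh ((ε - δ) / 2) (by linarith)
  rw [dist_comm, dist_eq_norm] at hbh
  exact IsLowerBoundUpTo.of_norm_sub_le hb hbh.le ε (by linarith)

variable [NormedSpace ℝ E]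

namespace IsLowerBoundUpTo

lemma smul {c : ℝ} (hh : IsLowerBoundUpTo x δ h) (hc : 0 ≤ c) :
    IsLowerBoundUpTo (fun t ↦ c • x t) (c * δ) (c • h) := fun ε hε ↦ by
  rcases hc.eq_or_lt with rfl | hc
  · simpa using Eventually.of_forall fun _ ↦ hε
  · filter_upwards [hh (ε / c) (by rwa [gt_iff_lt, lt_div_iff₀' hc])] with t ht
    rw [← smul_sub, negPart_smul_of_nonneg hc.le, norm_smul, Real.norm_of_nonneg hc.le]
    rwa [lt_div_iff₀' hc] at ht

lemma map {S : E →L[ℝ] E} (hh : IsLowerBoundUpTo x δ h) (hS : IsMarkov S) :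
    IsLowerBoundUpTo (fun t ↦ S (x t)) δ (S h) := fun ε hε ↦
  (hh ε hε).mono fun t ht ↦ by
    rw [← map_sub]
    exact (hS.norm_negPart_map_le _).trans_lt ht

end IsLowerBoundUpTo

def HasIndividualLowerBounds (T : ι → E →L[ℝ] E) (ε : ℝ) : Prop :=
  ∀ u, 0 ≤ u → ∃ k, 0 ≤ k ∧ ε * ‖u‖ ≤ ‖k‖ ∧ IsLowerBoundUpTo (T · u) 0 k

lemma hasIndividualLowerBounds_of_norm_eq_one {T : ι → E →L[ℝ] E} {ε : ℝ}
    (hlb : ∀ f : E, 0 ≤ f → ‖f‖ = 1 → ∃ h : E, 0 ≤ h ∧ ε ≤ ‖h‖ ∧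
      Tendsto (fun t ↦ ‖(T t f - h)⁻‖) atTop (𝓝 0)) : HasIndividualLowerBounds T ε := by
  intro u hu
  rcases eq_or_ne u 0 with rfl | hu0
  · exact ⟨0, le_rfl, by simp, fun δ hδ ↦ by simpa using Eventually.of_forall fun _ ↦ hδ⟩
  have hn : 0 < ‖u‖ := norm_pos_iff.2 hu0
  obtain ⟨h, h0, hεh, hh⟩ := hlb (‖u‖⁻¹ • u) (smul_nonneg (inv_nonneg.2 hn.le) hu)
    (by rw [norm_smul, norm_inv, norm_norm, inv_mul_cancel₀ hn.ne'])
  refine ⟨‖u‖ • h, smul_nonneg hn.le h0, ?_, ?_⟩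
  · rw [norm_smul, norm_norm, mul_comm]
    exact mul_le_mul_of_nonneg_left hεh hn.le
  · simpa [smul_smul, hn.ne'] using (isLowerBoundUpTo_zero_iff.2 hh).smul hn.le

end LowerBound

def IsALNorm (E : Type*) [NormedAddCommGroup E] [Lattice E] : Prop :=
  ∀ f g : E, 0 ≤ f → 0 ≤ g → ‖f + g‖ = ‖f‖ + ‖g‖

namespace IsALNorm

variable {E : Type*} [NormedAddCommGroup E] [Lattice E] [IsOrderedAddMonoid E]

lemma norm_sub_of_le (hE : IsALNorm E) {a b : E} (ha : 0 ≤ a) (hab : a ≤ b) :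
    ‖b - a‖ = ‖b‖ - ‖a‖ := by
  have := hE (b - a) a (sub_nonneg.2 hab) ha
  rw [sub_add_cancel] at this
  linarith

lemma eq_of_le_of_norm_le (hE : IsALNorm E) {a b : E} (ha : 0 ≤ a) (hab : a ≤ b)
    (hba : ‖b‖ ≤ ‖a‖) : a = b := by
  have := hE.norm_sub_of_le ha hab
  exact (sub_eq_zero.1 (norm_le_zero_iff.1 (by linarith))).symm

lemma norm_posPart_sub (hE : IsALNorm E) {a b : E} (ha : 0 ≤ a) (hb : 0 ≤ b) :
    ‖(a - b)⁺‖ = ‖a‖ - ‖b‖ + ‖(a - b)⁻‖ := by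
  have hab : (a - b)⁺ + b = (a - b)⁻ + a := by
    rw [add_comm (a - b)⁻ a, ← sub_eq_sub_iff_add_eq_add, posPart_sub_negPart]
  have := congrArg norm hab
  rw [hE _ _ (posPart_nonneg _) hb, hE _ _ (negPart_nonneg _) ha] at this
  linarith

variable [HasSolidNorm E] [CompleteSpace E]

lemma exists_tendsto_of_monotone (hE : IsALNorm E) {H : ℕ → E} (h0 : ∀ n, 0 ≤ H n)
    (hH : Monotone H) {C : ℝ} (hC : ∀ n, ‖H n‖ ≤ C) : ∃ x, Tendsto H atTop (𝓝 x) := by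
  have hnorm : Monotone fun n ↦ ‖H n‖ := fun m n hmn ↦
    norm_le_norm_of_nonneg_of_le (h0 m) (hH hmn)
  have hdist_of_le : ∀ m n, m ≤ n → dist (H m) (H n) = dist ‖H m‖ ‖H n‖ := fun m n hmn ↦ by
    rw [dist_comm, dist_eq_norm, hE.norm_sub_of_le (h0 m) (hH hmn), Real.dist_eq, abs_sub_comm,
      abs_of_nonneg (sub_nonneg.2 (hnorm hmn))]
  have hdist : ∀ m n, dist (H m) (H n) = dist ‖H m‖ ‖H n‖ := fun m n ↦
    (le_total m n).elim (hdist_of_le m n) fun hnm ↦ by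
      rw [dist_comm, hdist_of_le n m hnm, dist_comm]
  have hcauchy : CauchySeq fun n ↦ ‖H n‖ :=
    (tendsto_atTop_ciSup hnorm ⟨C, Set.forall_mem_range.2 hC⟩).cauchySeq
  refine cauchySeq_tendsto_of_complete (Metric.cauchySeq_iff.2 fun ε hε ↦ ?_)
  simpa only [hdist] using Metric.cauchySeq_iff.1 hcauchy ε hε

lemma exists_tendsto_of_antitone (hE : IsALNorm E) {H : ℕ → E} (h0 : ∀ n, 0 ≤ H n)
    (hH : Antitone H) : ∃ x, Tendsto H atTop (𝓝 x) := by
  have hle : ∀ n, H n ≤ H 0 := fun n ↦ hH (Nat.zero_le n)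
  obtain ⟨y, hy⟩ := hE.exists_tendsto_of_monotone (H := fun n ↦ H 0 - H n)
    (fun n ↦ sub_nonneg.2 (hle n)) (fun m n hmn ↦ sub_le_sub_left (hH hmn) _)
    (C := ‖H 0‖) fun n ↦ by rw [hE.norm_sub_of_le (h0 n) (hle n)]; linarith [norm_nonneg (H n)]
  exact ⟨H 0 - y, by simpa using (tendsto_const_nhds (x := H 0)).sub hy⟩

lemma exists_isGreatest (hE : IsALNorm E) {S : Set E} (hS0 : ∀ h ∈ S, 0 ≤ h) (hne : S.Nonempty)
    (hsup : SupClosed S) (hcl : IsClosed S) (hbdd : BddAbove ((‖·‖) '' S)) :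
    ∃ g, IsGreatest S g := by
  have hβ : ∀ h ∈ S, ‖h‖ ≤ sSup ((‖·‖) '' S) := fun h hh ↦ le_csSup hbdd ⟨h, hh, rfl⟩
  obtain ⟨r, -, hr, hrS⟩ := exists_seq_tendsto_sSup (hne.image _) hbdd
  choose s hsS hsr using hrS
  have hHS : ∀ n, partialSups s n ∈ S := fun n ↦
    hsup.finsetSup'_mem Finset.nonempty_Iic fun i _ ↦ hsS i
  obtain ⟨g, hg⟩ := hE.exists_tendsto_of_monotone (fun n ↦ hS0 _ (hHS n))
    (partialSups s).monotone fun n ↦ hβ _ (hHS n)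
  have hgS : g ∈ S := hcl.mem_of_tendsto hg (Eventually.of_forall hHS)
  have hgβ : sSup ((‖·‖) '' S) ≤ ‖g‖ := le_of_tendsto_of_tendsto' hr hg.norm fun n ↦
    hsr n ▸ norm_le_norm_of_nonneg_of_le (hS0 _ (hsS n)) (le_partialSups s n)
  refine ⟨g, hgS, fun h hh ↦ le_sup_left.trans_eq (hE.eq_of_le_of_norm_le (hS0 g hgS)
    le_sup_right ((hβ _ (hsup hh hgS)).trans hgβ)).symm⟩

variable {ι : Type*} [Preorder ι] [IsDirectedOrder ι] [Nonempty ι] {x : ι → E}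

lemma exists_isGreatest_isLowerBoundUpTo (hE : IsALNorm E) {C : ℝ}
    (hx : ∀ᶠ t in atTop, 0 ≤ x t ∧ ‖x t‖ ≤ C) :
    ∃ g, IsGreatest (asymptoticLowerBounds x) g := by
  refine hE.exists_isGreatest (fun h hh ↦ hh.1) ⟨0, le_rfl, fun ε hε ↦ ?_⟩
    (fun a ha b hb ↦ ⟨ha.1.trans le_sup_left, by simpa using ha.2.sup hb.2⟩)
    (isClosed_nonneg.inter (isClosed_setOf_isLowerBoundUpTo x 0)) ⟨C, ?_⟩
  · filter_upwards [hx] with t ht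
    simpa [negPart_eq_zero.2 ht.1] using hε
  · rintro _ ⟨h, hh, rfl⟩
    simpa using hh.2.norm_le hh.1 (hx.mono fun _ ht ↦ ht.2)

lemma exists_isLowerBoundUpTo_zero_of_summable (hE : IsALNorm E) {C : ℝ}
    (hx : ∀ᶠ t in atTop, ‖x t‖ ≤ C) {H : ℕ → E} {δ : ℕ → ℝ} (hδ0 : ∀ n, 0 ≤ δ n)
    (hδ : Summable δ) (hH0 : ∀ n, 0 ≤ H n) (hH : ∀ n, IsLowerBoundUpTo x (δ n) (H n)) {r : ℝ}
    (hr : ∀ n, r ≤ ‖H n‖) : ∃ h, 0 ≤ h ∧ IsLowerBoundUpTo x 0 h ∧ r ≤ ‖h‖ := by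
  have hV : ∀ m n, IsLowerBoundUpTo x (∑' i, δ (i + m)) (partialSups (fun i ↦ H (i + m)) n) :=
    fun m n ↦ (IsLowerBoundUpTo.partialSups (fun i ↦ hH (i + m)) n).mono
      (((summable_nat_add_iff m).2 hδ).sum_le_tsum _ fun i _ ↦ hδ0 _)
  have hHV : ∀ m n, H m ≤ partialSups (fun i ↦ H (i + m)) n := fun m n ↦ by
    simpa using le_partialSups_of_le (fun i ↦ H (i + m)) (Nat.zero_le n)
  -- `Z m = ⨆ i, H (i + m)`, and the limit `h` of the `Z m` is `limsup H`
  choose Z hZ using fun m ↦ hE.exists_tendsto_of_monotone (fun n ↦ (hH0 m).trans (hHV m n))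
    (partialSups _).monotone fun n ↦ (hV m n).norm_le ((hH0 m).trans (hHV m n)) hx
  have hHZ : ∀ m i, H (i + m) ≤ Z m := fun m i ↦
    (le_partialSups _ i).trans ((partialSups _).monotone.ge_of_tendsto (hZ m) i)
  have hZδ : ∀ m, IsLowerBoundUpTo x (∑' i, δ (i + m)) (Z m) := fun m ↦
    (isClosed_setOf_isLowerBoundUpTo x _).mem_of_tendsto (hZ m) (Eventually.of_forall (hV m))
  have hZanti : Antitone Z := antitone_nat_of_succ_le fun m ↦
    le_of_tendsto' (hZ (m + 1)) fun n ↦ partialSups_le _ _ _ fun i _ ↦ by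
      simpa [add_assoc, add_comm 1] using hHZ m (i + 1)
  have hHZ' : ∀ m, H m ≤ Z m := fun m ↦ by simpa using hHZ m 0
  obtain ⟨h, hh⟩ := hE.exists_tendsto_of_antitone (fun m ↦ (hH0 m).trans (hHZ' m)) hZanti
  refine ⟨h, ge_of_tendsto' hh fun m ↦ (hH0 m).trans (hHZ' m),
    IsLowerBoundUpTo.of_tendsto (fun m ↦ (hZδ m).anti (hZanti.le_of_tendsto hh m))
      (tendsto_sum_nat_add δ),
    ge_of_tendsto' hh.norm fun m ↦
      (hr m).trans (norm_le_norm_of_nonneg_of_le (hH0 m) (hHZ' m))⟩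

end IsALNorm

lemma eventually_atTop_of_eventually_add {ι : Type*} [AddCommMonoid ι] [LinearOrder ι]
    [IsOrderedCancelAddMonoid ι] [ExistsAddOfLE ι] (s : ι) {p : ι → Prop}
    (h : ∀ᶠ t in atTop, p (s + t)) : ∀ᶠ t in atTop, p t := by
  obtain ⟨D, hD⟩ := eventually_atTop.1 h
  filter_upwards [eventually_ge_atTop (s + D)] with t ht
  obtain ⟨c, rfl⟩ := exists_add_of_le ht
  have hc : 0 ≤ c := le_of_add_le_add_left (a := s + D) (by rwa [add_zero])
  rw [add_assoc]
  exact hD _ (le_add_of_nonneg_right hc)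

section Semigroup

variable {ι E : Type*} [AddCommMonoid ι] [LinearOrder ι] [NormedAddCommGroup E] [Lattice E]
  [NormedSpace ℝ E]

structure IsMarkovSemigroup (T : ι → E →L[ℝ] E) : Prop where
  add_eq_comp : ∀ s t, 0 < s → 0 < t → T (s + t) = (T s).comp (T t)
  isMarkov : ∀ t, 0 < t → IsMarkov (T t)

namespace IsMarkovSemigroup

variable [NoMaxOrder ι] {T : ι → E →L[ℝ] E} {f g : E}

lemma eventually_nonneg_and_norm_eq (hT : IsMarkovSemigroup T) (hf : 0 ≤ f) :
    ∀ᶠ t in atTop, 0 ≤ T t f ∧ ‖T t f‖ = ‖f‖ :=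
  (eventually_gt_atTop 0).mono fun t ht ↦
    ⟨(hT.isMarkov t ht).nonneg f hf, (hT.isMarkov t ht).norm_map_of_nonneg f hf⟩

variable [IsOrderedCancelAddMonoid ι] [ExistsAddOfLE ι] [IsOrderedAddMonoid E] [HasSolidNorm E]

lemma isLowerBoundUpTo_apply (hT : IsMarkovSemigroup T) {s : ι} (hs : 0 < s) {δ : ℝ}
    (hg : IsLowerBoundUpTo (T · f) δ g) : IsLowerBoundUpTo (T · f) δ (T s g) := by
  have hshift : (fun t ↦ T s (T t f)) =ᶠ[atTop] fun t ↦ T (s + t) f := by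
    filter_upwards [eventually_gt_atTop 0] with t ht
    rw [hT.add_eq_comp s t hs ht, ContinuousLinearMap.comp_apply]
  exact fun ε hε ↦ eventually_atTop_of_eventually_add s
    (((hg.map (hT.isMarkov s hs)).congr hshift) ε hε)

lemma apply_eq_of_isGreatest (hE : IsALNorm E) (hT : IsMarkovSemigroup T)
    (hg : IsGreatest (asymptoticLowerBounds (T · f)) g) {s : ι} (hs : 0 < s) :
    T s g = g := by
  have hsg : 0 ≤ T s g ∧ IsLowerBoundUpTo (T · f) 0 (T s g) :=
    ⟨(hT.isMarkov s hs).nonneg g hg.1.1, hT.isLowerBoundUpTo_apply hs hg.1.2⟩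
  exact hE.eq_of_le_of_norm_le hsg.1 (hg.2 hsg) ((hT.isMarkov s hs).norm_map_of_nonneg g hg.1.1).ge

variable {ε : ℝ}

lemma exists_isLowerBoundUpTo_norm_ge (hE : IsALNorm E) (hT : IsMarkovSemigroup T)
    (hε : 0 ≤ ε) (hlb : HasIndividualLowerBounds T ε)
    (hf : 0 ≤ f) (hg0 : 0 ≤ g) (hg : IsLowerBoundUpTo (T · f) 0 g)
    (hfix : ∀ s, 0 < s → T s g = g) {δ : ℝ} (hδ : 0 < δ) :
    ∃ H, 0 ≤ H ∧ IsLowerBoundUpTo (T · f) δ H ∧ ‖g‖ + ε * (‖f‖ - ‖g‖) ≤ ‖H‖ := by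
  obtain ⟨s, hs, hsδ⟩ := ((eventually_gt_atTop 0).and (hg δ hδ)).exists
  have hTs := hT.isMarkov s hs
  have hu : ‖f‖ - ‖g‖ ≤ ‖(T s f - g)⁺‖ := by
    rw [hE.norm_posPart_sub (hTs.nonneg f hf) hg0, hTs.norm_map_of_nonneg f hf]
    linarith [norm_nonneg (T s f - g)⁻]
  obtain ⟨k, hk0, hku, hk⟩ := hlb _ (posPart_nonneg (T s f - g))
  refine ⟨g + k, add_nonneg hg0 hk0, ?_, ?_⟩
  · have horbit : (fun t ↦ g + T t (T s f - g)⁺ - T t (T s f - g)⁻) =ᶠ[atTop]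
        fun t ↦ T (s + t) f := by
      filter_upwards [eventually_gt_atTop 0] with t ht
      have hdecomp : T s f = g + ((T s f - g)⁺ - (T s f - g)⁻) := by
        rw [posPart_sub_negPart, add_sub_cancel]
      rw [add_comm s t, hT.add_eq_comp t s ht hs, ContinuousLinearMap.comp_apply]
      conv_rhs => rw [hdecomp, map_add, map_sub, hfix t ht, ← add_sub_assoc]
    have hsmall : ∀ᶠ t in atTop, 0 ≤ T t (T s f - g)⁻ ∧ ‖T t (T s f - g)⁻‖ ≤ δ :=
      (eventually_gt_atTop 0).mono fun t ht ↦ ⟨(hT.isMarkov t ht).nonneg _ (negPart_nonneg _),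
        ((hT.isMarkov t ht).norm_map_of_nonneg _ (negPart_nonneg _)).trans_le hsδ.le⟩
    have := (hk.add_sub hsmall g).congr horbit
    rw [zero_add] at this
    exact fun ε hε ↦ eventually_atTop_of_eventually_add s (this ε hε)
  · rw [hE g k hg0 hk0]
    linarith [mul_le_mul_of_nonneg_left hu hε]

variable [CompleteSpace E]

lemma norm_eq_of_isGreatest (hE : IsALNorm E) (hT : IsMarkovSemigroup T) (hε : 0 < ε)
    (hlb : HasIndividualLowerBounds T ε)
    (hf : 0 ≤ f) (hg : IsGreatest (asymptoticLowerBounds (T · f)) g) :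
    ‖g‖ = ‖f‖ := by
  have hnorm : ∀ᶠ t in atTop, ‖T t f‖ ≤ ‖f‖ :=
    (hT.eventually_nonneg_and_norm_eq hf).mono fun _ ht ↦ ht.2.le
  refine le_antisymm (by simpa using hg.1.2.norm_le hg.1.1 hnorm) (not_lt.1 fun hlt ↦ ?_)
  choose H hH0 hH hHnorm using fun n : ℕ ↦ hT.exists_isLowerBoundUpTo_norm_ge hE hε.le hlb hf
    hg.1.1 hg.1.2 (fun s hs ↦ hT.apply_eq_of_isGreatest hE hg hs) (pow_pos one_half_pos n)
  obtain ⟨h, hh0, hh, hhnorm⟩ := hE.exists_isLowerBoundUpTo_zero_of_summable hnorm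
    (fun n ↦ by positivity) summable_geometric_two hH0 hH hHnorm
  have := norm_le_norm_of_nonneg_of_le hh0 (hg.2 ⟨hh0, hh⟩)
  nlinarith [mul_pos hε (sub_pos.2 hlt)]

lemma exists_tendsto_of_nonneg (hE : IsALNorm E) (hT : IsMarkovSemigroup T) (hε : 0 < ε)
    (hlb : HasIndividualLowerBounds T ε)
    (hf : 0 ≤ f) : ∃ y, Tendsto (T · f) atTop (𝓝 y) := by
  have hx := hT.eventually_nonneg_and_norm_eq hf
  obtain ⟨g, hg⟩ := hE.exists_isGreatest_isLowerBoundUpTo (hx.mono fun _ ht ↦ ⟨ht.1, ht.2.le⟩)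
  have hgf := hT.norm_eq_of_isGreatest hE hε hlb hf hg
  refine ⟨g, tendsto_iff_norm_sub_tendsto_zero.2 (squeeze_zero' (Eventually.of_forall
    fun _ ↦ norm_nonneg _) ?_ (by simpa using
      (isLowerBoundUpTo_zero_iff.1 hg.1.2).const_mul 2))⟩
  filter_upwards [hx] with t ⟨ht0, htf⟩
  calc ‖T t f - g‖ = ‖(T t f - g)⁺ - (T t f - g)⁻‖ := by rw [posPart_sub_negPart]
    _ ≤ ‖(T t f - g)⁺‖ + ‖(T t f - g)⁻‖ := norm_sub_le _ _
    _ = 2 * ‖(T t f - g)⁻‖ := by rw [hE.norm_posPart_sub ht0 hg.1.1, htf, hgf]; ring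

theorem exists_tendsto_iff [(atTop : Filter ι).IsCountablyGenerated] (hE : IsALNorm E)
    (hT : IsMarkovSemigroup T) :
    (∃ P : E →L[ℝ] E, ∀ f : E, Tendsto (fun t ↦ T t f) atTop (𝓝 (P f))) ↔
      ∃ ε > (0 : ℝ), ∀ f : E, 0 ≤ f → ‖f‖ = 1 → ∃ h : E, 0 ≤ h ∧ ε ≤ ‖h‖ ∧
        Tendsto (fun t ↦ ‖(T t f - h)⁻‖) atTop (𝓝 0) := by
  constructor
  · rintro ⟨P, hP⟩
    refine ⟨1, one_pos, fun f hf hf1 ↦ ⟨P f, ?_, ?_, ?_⟩⟩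
    · exact isClosed_nonneg.mem_of_tendsto (hP f)
        ((hT.eventually_nonneg_and_norm_eq hf).mono fun _ ht ↦ ht.1)
    · refine (tendsto_nhds_unique (hP f).norm (tendsto_const_nhds.congr' ?_)).ge
      exact (hT.eventually_nonneg_and_norm_eq hf).mono fun _ ht ↦ (ht.2.trans hf1).symm
    · simpa using ((continuous_negPart.tendsto _).comp ((hP f).sub_const (P f))).norm
  · rintro ⟨ε, hε, hlb⟩
    have hlb' := hasIndividualLowerBounds_of_norm_eq_one hlb
    have hlim : ∀ f, ∃ y, Tendsto (T · f) atTop (𝓝 y) := fun f ↦ by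
      obtain ⟨y₁, h₁⟩ := hT.exists_tendsto_of_nonneg hE hε hlb' (posPart_nonneg f)
      obtain ⟨y₂, h₂⟩ := hT.exists_tendsto_of_nonneg hE hε hlb' (negPart_nonneg f)
      exact ⟨y₁ - y₂, by simpa only [← map_sub, posPart_sub_negPart] using h₁.sub h₂⟩
    choose y hy using hlim
    exact ⟨continuousLinearMapOfTendsto T (tendsto_pi_nhds.2 hy), hy⟩

end IsMarkovSemigroup

end Semigroup

/-- A Markov semigroup on an AL-space converges strongly if and only if every normalised
positive vector `f` admits an individual lower bound `h_f` with `inf_f ‖h_f‖ > 0`.  Both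
the time-discrete case `J = ℕ` and the case `J = (0,∞)` are covered. -/
theorem markov_semigroup_convergence_iff_individual_lower_bounds
    {E : Type*} [NormedAddCommGroup E] [Lattice E] [HasSolidNorm E] [IsOrderedAddMonoid E] [NormedSpace ℝ E] [CompleteSpace E]
    (hAL : ∀ f g : E, 0 ≤ f → 0 ≤ g → ‖f + g‖ = ‖f‖ + ‖g‖) :
    -- the time-discrete case `J = ℕ`
    (∀ S : E →L[ℝ] E,
      (∀ f : E, 0 ≤ f → 0 ≤ S f) → (∀ f : E, 0 ≤ f → ‖S f‖ = ‖f‖) →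
      ((∃ P : E →L[ℝ] E, ∀ f : E, Tendsto (fun n : ℕ => (S ^ n) f) atTop (𝓝 (P f))) ↔
        (∃ ε > (0:ℝ), ∀ f : E, 0 ≤ f → ‖f‖ = 1 →
          ∃ h : E, 0 ≤ h ∧ ε ≤ ‖h‖ ∧
            Tendsto (fun n : ℕ => ‖((S ^ n) f - h)⁻‖) atTop (𝓝 0)))) ∧
    -- the case `J = (0, ∞)`
    (∀ T : ℝ → E →L[ℝ] E,
      (∀ s t : ℝ, 0 < s → 0 < t → T (s + t) = (T s).comp (T t)) →
      (∀ t : ℝ, 0 < t → ∀ f : E, 0 ≤ f → 0 ≤ T t f) →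
      (∀ t : ℝ, 0 < t → ∀ f : E, 0 ≤ f → ‖T t f‖ = ‖f‖) →
      ((∃ P : E →L[ℝ] E, ∀ f : E, Tendsto (fun t : ℝ => T t f) atTop (𝓝 (P f))) ↔
        (∃ ε > (0:ℝ), ∀ f : E, 0 ≤ f → ‖f‖ = 1 →
          ∃ h : E, 0 ≤ h ∧ ε ≤ ‖h‖ ∧
            Tendsto (fun t : ℝ => ‖(T t f - h)⁻‖) atTop (𝓝 0)))) := by
  refine ⟨fun S hpos hnorm ↦ ?_, fun T hsg hpos hnorm ↦ ?_⟩
  · refine IsMarkovSemigroup.exists_tendsto_iff (T := (S ^ ·)) hAL ⟨fun s t _ _ ↦ ?_,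
      fun n _ ↦ (IsMarkov.mk hpos hnorm).pow n⟩
    rw [pow_add, ContinuousLinearMap.mul_def]
  · exact IsMarkovSemigroup.exists_tendsto_iff hAL ⟨hsg, fun t ht ↦ ⟨hpos t ht, hnorm t ht⟩⟩
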